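/- Let l ≥ 1 and let k₁,…,k_l be positive integers with k_l ≥ 2. Then for every complex number z with ‖z‖ ≤ 1, the family indexed by strictly increasing l-tuples 0 < n₁ < ⋯ < n_l with value z^{n_l}/(n₁^{k₁}⋯n_l^{k_l}) is summable, the resulting function Li_{k₁,…,k_l} is continuous on the closed unit disc {z : ℂ | ‖z‖ ≤ 1}, and Li_{k₁,…,k_l}(1) = ζ(k₁,…,k_l). -/

import Mathlib

/-- Summability of products over pi types. -/
lemma summable_pi_prod (m : ℕ) (f : ℕ → ℝ) (hf : Summable f) (h0 : ∀ n, 0 ≤ f n) :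
    Summable (fun x : Fin m → ℕ => ∏ i, f (x i)) := by
  induction m with
  | zero => simpa using Summable.of_finite
  | succ m ih =>
    rw [← (Fin.consEquiv (fun _ : Fin (m+1) => ℕ)).summable_iff]
    have h := hf.mul_of_nonneg ih h0 (fun x => Finset.prod_nonneg fun i _ => h0 _)
    refine h.congr fun p => ?_
    simp [Fin.consEquiv, Fin.prod_univ_succ]

/-- The key comparison inequality. -/
lemma key_ineq (l : ℕ) (k : Fin (l + 1) → ℕ) (hk : ∀ i, 0 < k i)
    (hkl : 2 ≤ k (Fin.last l)) (n : Fin (l + 1) → ℕ) (hmono : StrictMono n)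
    (hpos : ∀ i, 0 < n i) :
    ∏ i, (n i : ℝ) ^ (1 + (2 * ((l : ℝ) + 1))⁻¹) ≤ ∏ i, (n i : ℝ) ^ (k i) := by
  set ε : ℝ := (2 * ((l : ℝ) + 1))⁻¹ with hε
  have hεpos : 0 < ε := by positivity
  have h1 : ∀ i, (1 : ℝ) ≤ (n i : ℝ) := fun i => by exact_mod_cast hpos i
  set N : ℝ := (n (Fin.last l) : ℝ) with hN
  have hN1 : (1 : ℝ) ≤ N := h1 _
  have hN0 : (0 : ℝ) < N := lt_of_lt_of_le one_pos hN1
  have hle : ∀ i, (n i : ℝ) ≤ N := fun i => by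
    exact_mod_cast Nat.cast_le.mpr (hmono.monotone (Fin.le_last i))
  rw [Fin.prod_univ_castSucc, Fin.prod_univ_castSucc]
  have step : ∀ i : Fin l,
      (n i.castSucc : ℝ) ^ (1 + ε) ≤ (n i.castSucc : ℝ) ^ (k i.castSucc) * N ^ ε := by
    intro i
    have hx0 : (0:ℝ) < (n i.castSucc : ℝ) := lt_of_lt_of_le one_pos (h1 _)
    rw [Real.rpow_add hx0, Real.rpow_one]
    exact mul_le_mul (le_self_pow₀ (h1 _) (hk _).ne')
      (Real.rpow_le_rpow hx0.le (hle _) hεpos.le) (Real.rpow_nonneg hx0.le _)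
      (by positivity)
  calc (∏ i : Fin l, (n i.castSucc : ℝ) ^ (1 + ε)) * N ^ (1 + ε)
      ≤ (∏ i : Fin l, (n i.castSucc : ℝ) ^ (k i.castSucc) * N ^ ε) * N ^ (1 + ε) := by
        refine mul_le_mul_of_nonneg_right (Finset.prod_le_prod ?_ ?_) (by positivity)
        · exact fun i _ => Real.rpow_nonneg (Nat.cast_nonneg _) _
        · exact fun i _ => step i
    _ = (∏ i : Fin l, (n i.castSucc : ℝ) ^ (k i.castSucc)) * N ^ ((l : ℝ) * ε + (1 + ε)) := by
        rw [Finset.prod_mul_distrib, Finset.prod_const, Finset.card_univ, Fintype.card_fin,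
          ← Real.rpow_natCast (N ^ ε), ← Real.rpow_mul hN0.le, mul_assoc,
          ← Real.rpow_add hN0]
        ring_nf
    _ ≤ (∏ i : Fin l, (n i.castSucc : ℝ) ^ (k i.castSucc)) * N ^ (k (Fin.last l)) := by
        refine mul_le_mul_of_nonneg_left ?_
          (Finset.prod_nonneg fun i _ => by positivity)
        rw [← Real.rpow_natCast N (k (Fin.last l))]
        apply Real.rpow_le_rpow_of_exponent_le hN1
        have h2 : ((l:ℝ)+1) * ε = 2⁻¹ := by rw [hε]; field_simp
        have h3 : (2:ℝ) ≤ (k (Fin.last l) : ℝ) := by exact_mod_cast hkl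
        nlinarith [hεpos]

/-- The multiple polylogarithm `Li_{k₁,…,k_{l+1}}(z)`. -/
noncomputable def MPL {l : ℕ} (k : Fin (l + 1) → ℕ) (z : ℂ) : ℂ :=
  ∑' n : {n : Fin (l + 1) → ℕ // StrictMono n ∧ ∀ i, 0 < n i},
    z ^ (n.1 (Fin.last l)) / ∏ i, (n.1 i : ℂ) ^ k i

/-- The multiple zeta value `ζ(k₁,…,k_{l+1})` as a real number. -/
noncomputable def MZV {l : ℕ} (k : Fin (l + 1) → ℕ) : ℝ :=
  ∑' n : {n : Fin (l + 1) → ℕ // StrictMono n ∧ ∀ i, 0 < n i},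
    1 / ∏ i, (n.1 i : ℝ) ^ k i

/-- For positive integer exponents `k₁,…,k_l` with `k_l ≥ 2`: on every point
of the closed unit disc the multiple polylogarithm series is summable, the resulting
function `Li_{k₁,…,k_l}` is continuous on the closed unit disc, and its value at `1`
is the multiple zeta value `ζ(k₁,…,k_l)`. -/
theorem mpl_closed_disc (l : ℕ) (k : Fin (l + 1) → ℕ) (hk : ∀ i, 0 < k i)
    (hkl : 2 ≤ k (Fin.last l)) :
    (∀ z : ℂ, ‖z‖ ≤ 1 →
      Summable (fun n : {n : Fin (l + 1) → ℕ // StrictMono n ∧ ∀ i, 0 < n i} =>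
        z ^ (n.1 (Fin.last l)) / ∏ i, (n.1 i : ℂ) ^ k i)) ∧
    ContinuousOn (MPL k) {z : ℂ | ‖z‖ ≤ 1} ∧
    MPL k 1 = (MZV k : ℂ) := by
  set S := {n : Fin (l + 1) → ℕ // StrictMono n ∧ ∀ i, 0 < n i}
  set e : ℝ := 1 + (2 * ((l : ℝ) + 1))⁻¹ with he
  have he1 : 1 < e := by rw [he]; nlinarith [show (0:ℝ) < (2 * ((l:ℝ)+1))⁻¹ by positivity]
  -- the majorant
  set maj : S → ℝ := fun n => ∏ i, (n.1 i : ℝ) ^ (-e) with hmaj_def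
  have hmaj_nonneg : ∀ n : S, 0 ≤ maj n := fun n =>
    Finset.prod_nonneg fun i _ => Real.rpow_nonneg (Nat.cast_nonneg _) _
  have hsummaj : Summable maj := by
    have hb : Summable (fun m : ℕ => (m : ℝ) ^ (-e)) :=
      Real.summable_nat_rpow.mpr (by linarith)
    have h0 : ∀ m : ℕ, 0 ≤ (m : ℝ) ^ (-e) := fun m =>
      Real.rpow_nonneg (Nat.cast_nonneg _) _
    exact ((summable_pi_prod (l + 1) _ hb h0).comp_injective Subtype.val_injective)
  -- the norm bound
  have hbound : ∀ (z : ℂ), ‖z‖ ≤ 1 → ∀ n : S,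
      ‖z ^ (n.1 (Fin.last l)) / ∏ i, (n.1 i : ℂ) ^ k i‖ ≤ maj n := by
    intro z hz n
    obtain ⟨nn, hmono, hpos⟩ := n
    have h1 : ∀ i, (1 : ℝ) ≤ (nn i : ℝ) := fun i => by exact_mod_cast hpos i
    have hP0 : (0:ℝ) < ∏ i, (nn i : ℝ) ^ k i :=
      Finset.prod_pos fun i _ => pow_pos (lt_of_lt_of_le one_pos (h1 i)) _
    have hnorm : ‖z ^ (nn (Fin.last l)) / ∏ i, (nn i : ℂ) ^ k i‖
        = ‖z‖ ^ (nn (Fin.last l)) / ∏ i, (nn i : ℝ) ^ k i := by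
      rw [norm_div, norm_pow, norm_prod]
      congr 1
      exact Finset.prod_congr rfl fun i _ => by
        rw [norm_pow, Complex.norm_natCast]
    rw [hnorm]
    have h2 : ‖z‖ ^ (nn (Fin.last l)) ≤ 1 := pow_le_one₀ (norm_nonneg _) hz
    have h3 : ‖z‖ ^ (nn (Fin.last l)) / ∏ i, (nn i : ℝ) ^ k i
        ≤ 1 / ∏ i, (nn i : ℝ) ^ k i := by
      gcongr
    refine h3.trans ?_
    have hE0 : (0:ℝ) < ∏ i, (nn i : ℝ) ^ e :=
      Finset.prod_pos fun i _ => Real.rpow_pos_of_pos (lt_of_lt_of_le one_pos (h1 i)) _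
    have hkey : ∏ i, (nn i : ℝ) ^ e ≤ ∏ i, (nn i : ℝ) ^ k i :=
      key_ineq l k hk hkl nn hmono hpos
    have : maj ⟨nn, hmono, hpos⟩ = (∏ i, (nn i : ℝ) ^ e)⁻¹ := by
      rw [hmaj_def]
      simp only [← Finset.prod_inv_distrib]
      exact Finset.prod_congr rfl fun i _ =>
        Real.rpow_neg (Nat.cast_nonneg _) e
    rw [this, one_div]
    exact inv_anti₀ hE0 hkey
  have hsum : ∀ z : ℂ, ‖z‖ ≤ 1 →
      Summable (fun n : S => z ^ (n.1 (Fin.last l)) / ∏ i, (n.1 i : ℂ) ^ k i) :=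
    fun z hz => Summable.of_norm_bounded hsummaj (hbound z hz)
  refine ⟨hsum, ?_, ?_⟩
  · -- continuity
    have : ContinuousOn
        (fun z : ℂ => ∑' n : S, z ^ (n.1 (Fin.last l)) / ∏ i, (n.1 i : ℂ) ^ k i)
        {z : ℂ | ‖z‖ ≤ 1} := by
      apply continuousOn_tsum (u := maj)
      · intro n
        exact ((continuous_pow _).div_const _).continuousOn
      · exact hsummaj
      · intro n x hx
        exact hbound x hx n
    exact this
  · -- value at 1
    have hreal : Summable (fun n : S => 1 / ∏ i, (n.1 i : ℝ) ^ k i) := by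
      refine Summable.of_norm_bounded hsummaj ?_
      intro n
      have h := hbound 1 (by simp) n
      calc ‖1 / ∏ i, (n.1 i : ℝ) ^ k i‖
          = ‖((1 / ∏ i, (n.1 i : ℝ) ^ k i : ℝ) : ℂ)‖ := (Complex.norm_real _).symm
        _ = ‖(1:ℂ) ^ (n.1 (Fin.last l)) / ∏ i, (n.1 i : ℂ) ^ k i‖ := by
            congr 1
            push_cast
            rw [one_pow]
        _ ≤ maj n := h
    rw [MPL, MZV, Complex.ofReal_tsum]
    refine tsum_congr fun n => ?_
    push_cast
    rw [one_pow]
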